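/- Second-moment smoothness of the uniform smoothing gradient estimator: for every β > 0 and all x, y ∈ ℝ^d, E_{u ~ Unif(S)} ‖(d/β)(f(x + βu) − f(x)) u − (d/β)(f(y + βu) − f(y)) u‖² ≤ 3 d L² ‖x − y‖² + (3/2) L² d² β². -/

import Mathlib

/-!
By the descent lemma `|f (z + v) - f z - ⟪∇f z, v⟫| ≤ L/2 ‖v‖²`, applied at `x` and at `y`
with `v = β u`, the difference of the two estimates is `d (⟪g, u⟫ + r / β) u` with
`g = ∇f x - ∇f y` and `|r| ≤ L β²`; since `(a + b)² ≤ 3 a² + 3/2 b²`, its squared norm is at most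
`3 d² ⟪g, u⟫² + 3/2 d² L² β²`. The measure on the sphere is invariant under linear isometries, so
`E ⟪g, u⟫²` depends only on `‖g‖`; summing over an orthonormal basis gives `E ⟪g, u⟫² = ‖g‖² / d`,
and `‖g‖ ≤ L ‖x - y‖`.
-/

open MeasureTheory

/-- The uniform probability measure (normalized surface measure) on the unit sphere
of `ℝ^d`. -/
noncomputable def uniformUnitSphere (d : ℕ) :
    Measure (Metric.sphere (0 : EuclideanSpace ℝ (Fin d)) 1) :=
  ((volume : Measure (EuclideanSpace ℝ (Fin d))).toSphere Set.univ)⁻¹ •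
    (volume : Measure (EuclideanSpace ℝ (Fin d))).toSphere

open Metric Set
open scoped RealInnerProductSpace Pointwise

section Smoothing

variable {V : Type*} [NormedAddCommGroup V] [InnerProductSpace ℝ V] [CompleteSpace V]
  {f : V → ℝ} {L : ℝ}

noncomputable def smoothingGradientEstimate (f : V → ℝ) (c β : ℝ) (x u : V) : V :=
  (c / β * (f (x + β • u) - f x)) • u

theorem abs_sub_sub_inner_gradient_le (hf : Differentiable ℝ f)
    (hL : ∀ u v, ‖gradient f u - gradient f v‖ ≤ L * ‖u - v‖) (z v : V) :
    |f (z + v) - f z - ⟪gradient f z, v⟫| ≤ L / 2 * ‖v‖ ^ 2 := by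
  have hφ : ∀ t : ℝ, HasDerivAt (fun t : ℝ => f (z + t • v) - f z - t * ⟪gradient f z, v⟫)
      ⟪gradient f (z + t • v) - gradient f z, v⟫ t := by
    intro t
    have hline : HasDerivAt (fun t : ℝ => z + t • v) v t := by
      simpa using ((hasDerivAt_id t).smul_const v).const_add z
    have := (((hf _).hasGradientAt.hasFDerivAt.comp_hasDerivAt t hline).sub_const (f z)).sub
      ((hasDerivAt_id t).mul_const ⟪gradient f z, v⟫)
    exact this.congr_deriv (by simp [inner_sub_left])
  have hB : ∀ t : ℝ, HasDerivAt (fun t : ℝ => L / 2 * ‖v‖ ^ 2 * t ^ 2) (L * ‖v‖ ^ 2 * t) t :=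
    fun t => ((hasDerivAt_pow 2 t).const_mul (L / 2 * ‖v‖ ^ 2)).congr_deriv (by push_cast; ring)
  -- `φ t = f (z + t • v) - f z - t ⟪∇f z, v⟫` has `|φ' t| ≤ L ‖v‖² t`, so it is fenced by the
  -- parabola `L/2 ‖v‖² t²`.
  have key := image_norm_le_of_norm_deriv_right_le_deriv_boundary (a := 0) (b := 1)
    (fun t _ => (hφ t).continuousAt.continuousWithinAt) (fun t _ => (hφ t).hasDerivWithinAt)
    (by simp) hB (fun t ht => ?_) (right_mem_Icc.2 zero_le_one)
  · simpa using key
  calc ‖⟪gradient f (z + t • v) - gradient f z, v⟫‖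
      ≤ ‖gradient f (z + t • v) - gradient f z‖ * ‖v‖ := by
        rw [Real.norm_eq_abs]; exact abs_real_inner_le_norm _ _
    _ ≤ L * ‖t • v‖ * ‖v‖ := by
        gcongr
        simpa using hL (z + t • v) z
    _ = L * ‖v‖ ^ 2 * t := by
        rw [norm_smul, Real.norm_of_nonneg ht.1]; ring

theorem norm_smoothingGradientEstimate_sub_sq_le (hf : Differentiable ℝ f)
    (hL : ∀ u v, ‖gradient f u - gradient f v‖ ≤ L * ‖u - v‖) (c : ℝ) {β : ℝ} (hβ : 0 < β)
    (x y : V) {u : V} (hu : ‖u‖ = 1) :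
    ‖smoothingGradientEstimate f c β x u - smoothingGradientEstimate f c β y u‖ ^ 2
      ≤ 3 * c ^ 2 * ⟪gradient f x - gradient f y, u⟫ ^ 2 + 3 / 2 * c ^ 2 * L ^ 2 * β ^ 2 := by
  have hβu : ‖β • u‖ = β := by rw [norm_smul, hu, Real.norm_of_nonneg hβ.le, mul_one]
  have hx := abs_sub_sub_inner_gradient_le hf hL x (β • u)
  have hy := abs_sub_sub_inner_gradient_le hf hL y (β • u)
  rw [hβu] at hx hy
  set P := f (x + β • u) - f x - ⟪gradient f x, β • u⟫
  set Q := f (y + β • u) - f y - ⟪gradient f y, β • u⟫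
  set s := ⟪gradient f x - gradient f y, u⟫
  have hsplit : c / β * (f (x + β • u) - f x) - c / β * (f (y + β • u) - f y)
      = c * (s + (P - Q) / β) := by
    simp only [P, Q, s, inner_sub_left, real_inner_smul_right]
    field_simp
    ring
  have hPQ : ((P - Q) / β) ^ 2 ≤ (L * β) ^ 2 := by
    have h : |P - Q| ≤ L * β ^ 2 := (abs_sub _ _).trans (by linarith)
    rw [div_pow, div_le_iff₀ (by positivity), ← sq_abs]
    calc |P - Q| ^ 2 ≤ (L * β ^ 2) ^ 2 := pow_le_pow_left₀ (abs_nonneg _) h 2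
      _ = (L * β) ^ 2 * β ^ 2 := by ring
  rw [smoothingGradientEstimate, smoothingGradientEstimate, ← sub_smul, norm_smul, hu, mul_one,
    Real.norm_eq_abs, sq_abs, hsplit]
  nlinarith [mul_le_mul_of_nonneg_left hPQ (sq_nonneg c),
    mul_nonneg (sq_nonneg c) (sq_nonneg (2 * s - (P - Q) / β))]

end Smoothing

section SphereMoment

variable {E : Type*} [NormedAddCommGroup E]

def LinearIsometryEquiv.unitSphereHomeomorph [NormedSpace ℝ E] (e : E ≃ₗᵢ[ℝ] E) :
    sphere (0 : E) 1 ≃ₜ sphere (0 : E) 1 :=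
  e.toHomeomorph.sets (by ext; simp)

variable [MeasurableSpace E] [BorelSpace E]

theorem LinearIsometryEquiv.measurePreserving_unitSphereHomeomorph [NormedSpace ℝ E]
    {μ : Measure E} (e : E ≃ₗᵢ[ℝ] E) (he : MeasurePreserving e μ μ) :
    MeasurePreserving e.unitSphereHomeomorph μ.toSphere μ.toSphere := by
  refine ⟨e.unitSphereHomeomorph.continuous.measurable, Measure.ext fun s hs => ?_⟩
  have hpre : Ioo (0 : ℝ) 1 • ((↑) '' (e.unitSphereHomeomorph ⁻¹' s) : Set E)
      = e ⁻¹' (Ioo (0 : ℝ) 1 • ((↑) '' s)) := by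
    ext x
    simp only [Set.mem_smul, mem_image, mem_preimage, Subtype.exists, mem_sphere_zero_iff_norm,
      exists_and_right, exists_eq_right]
    constructor
    · rintro ⟨r, hr, y, ⟨hy, hys⟩, rfl⟩
      exact ⟨r, hr, e y, ⟨by simpa using hy, hys⟩, by simp⟩
    · rintro ⟨r, hr, y, ⟨hy, hys⟩, hx⟩
      refine ⟨r, hr, e.symm y, ⟨by simpa using hy, ?_⟩, e.injective (by simp [hx])⟩
      convert hys
      exact e.apply_symm_apply y
  rw [Measure.map_apply e.unitSphereHomeomorph.continuous.measurable hs,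
    Measure.toSphere_apply' _ (e.unitSphereHomeomorph.continuous.measurable hs),
    Measure.toSphere_apply' _ hs, hpre,
    he.measure_preimage_emb e.toHomeomorph.measurableEmbedding]

theorem integral_toSphere_comp_linearIsometryEquiv [NormedSpace ℝ E] {G : Type*}
    [NormedAddCommGroup G] [NormedSpace ℝ G] {μ : Measure E} (e : E ≃ₗᵢ[ℝ] E)
    (he : MeasurePreserving e μ μ) (F : E → G) :
    ∫ u, F (e u) ∂μ.toSphere = ∫ u, F u ∂μ.toSphere :=
  (e.measurePreserving_unitSphereHomeomorph he).integral_comp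
    e.unitSphereHomeomorph.measurableEmbedding (fun u => F u)

variable [InnerProductSpace ℝ E] [FiniteDimensional ℝ E]

local notation "σ" => Measure.toSphere (volume : Measure E)

theorem integral_inner_sq_toSphere_of_norm_eq {v w : E} (h : ‖v‖ = ‖w‖) :
    ∫ u, ⟪v, u⟫ ^ 2 ∂σ = ∫ u, ⟪w, u⟫ ^ 2 ∂σ := by
  -- The reflection exchanging `v` and `w` preserves `σ`.
  set R := (ℝ ∙ (v - w))ᗮ.reflection
  calc ∫ u, ⟪v, u⟫ ^ 2 ∂σ
      = ∫ u, ⟪R v, R u⟫ ^ 2 ∂σ := by simp only [R.inner_map_map]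
    _ = ∫ u, ⟪w, R u⟫ ^ 2 ∂σ := by rw [Submodule.reflection_sub h]
    _ = ∫ u, ⟪w, u⟫ ^ 2 ∂σ :=
      integral_toSphere_comp_linearIsometryEquiv R R.measurePreserving fun x => ⟪w, x⟫ ^ 2

theorem finrank_mul_integral_inner_sq_toSphere (g : E) :
    Module.finrank ℝ E * ∫ u, ⟪g, u⟫ ^ 2 ∂σ = ‖g‖ ^ 2 * Measure.real σ univ := by
  set b := stdOrthonormalBasis ℝ E
  have hb : ∀ i, ∫ u, ⟪g, u⟫ ^ 2 ∂σ = ‖g‖ ^ 2 * ∫ u, ⟪b i, u⟫ ^ 2 ∂σ := fun i => by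
    rw [integral_inner_sq_toSphere_of_norm_eq (w := ‖g‖ • b i)
      (by rw [norm_smul, b.orthonormal.1 i, mul_one, norm_norm]), ← integral_const_mul]
    congr with u
    rw [real_inner_smul_left, mul_pow]
  have hint : ∀ i, Integrable (fun u : sphere (0 : E) 1 => ⟪b i, u⟫ ^ 2) σ := fun i =>
    ((continuous_const.inner continuous_subtype_val).pow 2).integrable_of_hasCompactSupport
      (.of_compactSpace _)
  calc Module.finrank ℝ E * ∫ u, ⟪g, u⟫ ^ 2 ∂σ
      = ∑ i, ‖g‖ ^ 2 * ∫ u, ⟪b i, u⟫ ^ 2 ∂σ := by simp [← hb]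
    _ = ‖g‖ ^ 2 * ∫ u, ∑ i, ⟪b i, u⟫ ^ 2 ∂σ := by
      rw [← Finset.mul_sum, integral_finsetSum _ fun i _ => hint i]
    _ = ‖g‖ ^ 2 * Measure.real σ univ := by
      simp only [b.sum_sq_inner_right, norm_eq_of_mem_sphere, one_pow, integral_const, smul_eq_mul,
        mul_one]

end SphereMoment

section UniformUnitSphere

variable (d : ℕ) [NeZero d]

instance : NeZero (volume : Measure (EuclideanSpace ℝ (Fin d))).toSphere :=
  ⟨Measure.toSphere_ne_zero _⟩

instance : IsProbabilityMeasure (uniformUnitSphere d) := isProbabilityMeasureSMul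

theorem integral_inner_sq_uniformUnitSphere (g : EuclideanSpace ℝ (Fin d)) :
    ∫ u, ⟪g, u⟫ ^ 2 ∂uniformUnitSphere d = ‖g‖ ^ 2 / d := by
  have hσ : ((volume : Measure (EuclideanSpace ℝ (Fin d))).toSphere univ).toReal ≠ 0 :=
    ENNReal.toReal_ne_zero.2 ⟨Measure.measure_univ_ne_zero.2 (NeZero.ne _), measure_ne_top _ _⟩
  have hI := finrank_mul_integral_inner_sq_toSphere g
  rw [finrank_euclideanSpace_fin, measureReal_def] at hI
  rw [uniformUnitSphere, integral_smul_measure, ENNReal.toReal_inv, smul_eq_mul]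
  have hd : (d : ℝ) ≠ 0 := NeZero.ne _
  field_simp
  linarith

end UniformUnitSphere

theorem uniform_smoothing_second_moment_smoothness_general
    (d : ℕ) (hd : 1 ≤ d)
    (f : EuclideanSpace ℝ (Fin d) → ℝ)
    (L : ℝ)
    (hdiff : Differentiable ℝ f)
    (hLip : ∀ u v, ‖gradient f u - gradient f v‖ ≤ L * ‖u - v‖)
    (β : ℝ) (hβ : 0 < β)
    (x y : EuclideanSpace ℝ (Fin d)) :
    (∫ u : Metric.sphere (0 : EuclideanSpace ℝ (Fin d)) 1,
      ‖(((d : ℝ) / β) * (f (x + β • (u : EuclideanSpace ℝ (Fin d))) - f x)) •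
          (u : EuclideanSpace ℝ (Fin d)) -
        (((d : ℝ) / β) * (f (y + β • (u : EuclideanSpace ℝ (Fin d))) - f y)) •
          (u : EuclideanSpace ℝ (Fin d))‖ ^ 2 ∂(uniformUnitSphere d))
      ≤ 3 * d * L ^ 2 * ‖x - y‖ ^ 2 + 3 / 2 * L ^ 2 * (d : ℝ) ^ 2 * β ^ 2 := by
  have : NeZero d := ⟨by omega⟩
  set g := gradient f x - gradient f y
  have hfc := hdiff.continuous
  have hest : Integrable (fun u : sphere (0 : EuclideanSpace ℝ (Fin d)) 1 =>
      ‖smoothingGradientEstimate f d β x u - smoothingGradientEstimate f d β y u‖ ^ 2)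
      (uniformUnitSphere d) :=
    Continuous.integrable_of_hasCompactSupport (by unfold smoothingGradientEstimate; fun_prop)
      (.of_compactSpace _)
  have hinner : Integrable (fun u : sphere (0 : EuclideanSpace ℝ (Fin d)) 1 =>
      3 * (d : ℝ) ^ 2 * ⟪g, u⟫ ^ 2) (uniformUnitSphere d) :=
    Continuous.integrable_of_hasCompactSupport (by fun_prop) (.of_compactSpace _)
  calc _ ≤ ∫ u, (3 * (d : ℝ) ^ 2 * ⟪g, u⟫ ^ 2 + 3 / 2 * (d : ℝ) ^ 2 * L ^ 2 * β ^ 2)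
          ∂uniformUnitSphere d :=
        integral_mono hest (hinner.add (integrable_const _)) fun u =>
          norm_smoothingGradientEstimate_sub_sq_le hdiff hLip d hβ x y (norm_eq_of_mem_sphere u)
    _ = 3 * d * ‖g‖ ^ 2 + 3 / 2 * L ^ 2 * (d : ℝ) ^ 2 * β ^ 2 := by
      rw [integral_add hinner (integrable_const _), integral_const_mul,
        integral_inner_sq_uniformUnitSphere, integral_const, probReal_univ, one_smul]
      field_simp
    _ ≤ 3 * d * L ^ 2 * ‖x - y‖ ^ 2 + 3 / 2 * L ^ 2 * (d : ℝ) ^ 2 * β ^ 2 := by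
      have hg : ‖g‖ ^ 2 ≤ (L * ‖x - y‖) ^ 2 := pow_le_pow_left₀ (norm_nonneg g) (hLip x y) 2
      linear_combination (3 * (d : ℝ)) * hg

/-- Second-moment smoothness of the uniform smoothing gradient estimator:
`E_{u ~ Unif(S)} ‖(d/β)(f(x+βu)−f(x))u − (d/β)(f(y+βu)−f(y))u‖²
  ≤ 3 d L² ‖x−y‖² + (3/2) L² d² β²`. -/
theorem uniform_smoothing_second_moment_smoothness
    (d : ℕ) (hd : 1 ≤ d)
    (f : EuclideanSpace ℝ (Fin d) → ℝ)
    (L : ℝ) (hL : 0 < L)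
    (hdiff : Differentiable ℝ f)
    (hLip : ∀ u v, ‖gradient f u - gradient f v‖ ≤ L * ‖u - v‖)
    (β : ℝ) (hβ : 0 < β)
    (x y : EuclideanSpace ℝ (Fin d)) :
    (∫ u : Metric.sphere (0 : EuclideanSpace ℝ (Fin d)) 1,
      ‖(((d : ℝ) / β) * (f (x + β • (u : EuclideanSpace ℝ (Fin d))) - f x)) •
          (u : EuclideanSpace ℝ (Fin d)) -
        (((d : ℝ) / β) * (f (y + β • (u : EuclideanSpace ℝ (Fin d))) - f y)) •
          (u : EuclideanSpace ℝ (Fin d))‖ ^ 2 ∂(uniformUnitSphere d))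
      ≤ 3 * d * L ^ 2 * ‖x - y‖ ^ 2 + 3 / 2 * L ^ 2 * (d : ℝ) ^ 2 * β ^ 2 :=
  uniform_smoothing_second_moment_smoothness_general d hd f L hdiff hLip β hβ x y
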